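/- In the 5-tuple setup for a (house, bull)-free graph G, if additionally every proper homogeneous set of G is a stable set, then B = ∅, i.e., no vertex of V(G)∖A is complete to A. -/
import Mathlib


open SimpleGraph

/-- The bull graph: vertices a,b,c,d,e = 0,1,2,3,4; edges ab,bc,cd,be,ce. -/
def bull : SimpleGraph (Fin 5) :=
  SimpleGraph.fromEdgeSet {s(0,1), s(1,2), s(2,3), s(1,4), s(2,4)}

/-- The house graph: complement of the path on five vertices. -/
def house : SimpleGraph (Fin 5) := (SimpleGraph.pathGraph 5)ᶜ

/-- `G` contains no induced subgraph isomorphic to `F`. -/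
def FreeOf {V W : Type*} (G : SimpleGraph V) (F : SimpleGraph W) : Prop :=
  ¬ ∃ f : W ↪ V, ∀ a b : W, G.Adj (f a) (f b) ↔ F.Adj a b

/-- A homogeneous set: every outside vertex is complete or anticomplete to it. -/
def IsHomogSet {V : Type*} (G : SimpleGraph V) (S : Set V) : Prop :=
  ∀ v ∉ S, (∀ s ∈ S, G.Adj v s) ∨ (∀ s ∈ S, ¬ G.Adj v s)

/-- A proper homogeneous set: at least two vertices and not all of `V`. -/
def IsProperHomogSet {V : Type*} (G : SimpleGraph V) (S : Set V) : Prop :=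
  IsHomogSet G S ∧ S.Nontrivial ∧ S ≠ Set.univ

/-- A stable (independent) set. -/
def IsStableSet {V : Type*} (G : SimpleGraph V) (S : Set V) : Prop :=
  S.Pairwise fun u v => ¬ G.Adj u v

/-- A module: a nonempty homogeneous set that overlaps no homogeneous set. -/
def IsModuleSet {V : Type*} (G : SimpleGraph V) (M : Set V) : Prop :=
  M.Nonempty ∧ IsHomogSet G M ∧
    ∀ S : Set V, IsHomogSet G S → S ⊆ M ∨ M ⊆ S ∨ S ∩ M = ∅

/-- A quasi-maximal module: a module, different from `V`, such that the only
module strictly containing it is `V`. -/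
def IsQuasiMaxModule {V : Type*} (G : SimpleGraph V) (M : Set V) : Prop :=
  IsModuleSet G M ∧ M ≠ Set.univ ∧
    ∀ S : Set V, IsModuleSet G S → M ⊂ S → S = Set.univ

/-- A clique cover: a partition of the vertex set into cliques. -/
def IsCliqueCover {V : Type*} (G : SimpleGraph V) (C : Set (Set V)) : Prop :=
  Setoid.IsPartition C ∧ ∀ Q ∈ C, G.IsClique Q

/-- `cc G`: the minimum number of cliques in a clique cover of `G`. -/
noncomputable def cliqueCoverNumber {V : Type*} (G : SimpleGraph V) : ℕ :=
  sInf {n | ∃ C : Set (Set V), IsCliqueCover G C ∧ C.ncard = n}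

/-- `S` is complete to `T`: every vertex of `S` is adjacent to every vertex of `T`. -/
def CompleteTo {V : Type*} (G : SimpleGraph V) (S T : Set V) : Prop :=
  ∀ s ∈ S, ∀ t ∈ T, G.Adj s t

/-- `S` is anticomplete to `T`: no vertex of `S` is adjacent to a vertex of `T`. -/
def AnticompleteTo {V : Type*} (G : SimpleGraph V) (S T : Set V) : Prop :=
  ∀ s ∈ S, ∀ t ∈ T, ¬ G.Adj s t

/-- The 5-tuple setup from the paper: five nonempty pairwise disjoint sets
`A 0, …, A 4` (corresponding to `A_1, …, A_5`, indices modulo 5) with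
`A i` complete to `A (i+1)` for `i ∈ {0,1,2,3}`, `A i` anticomplete to
`A (i+2)` for all `i`, and `A 4` complete or anticomplete to `A 0`. -/
def GoodTuple {V : Type*} (G : SimpleGraph V) (A : Fin 5 → Set V) : Prop :=
  (∀ i, (A i).Nonempty) ∧
  (Pairwise fun i j => Disjoint (A i) (A j)) ∧
  (∀ i : Fin 5, i ≠ 4 → CompleteTo G (A i) (A (i + 1))) ∧
  (∀ i : Fin 5, AnticompleteTo G (A i) (A (i + 2))) ∧
  (CompleteTo G (A 4) (A 0) ∨ AnticompleteTo G (A 4) (A 0))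

/-- A good tuple whose union `A` is inclusionwise maximal among all good tuples. -/
def MaximalGoodTuple {V : Type*} (G : SimpleGraph V) (A : Fin 5 → Set V) : Prop :=
  GoodTuple G A ∧ ∀ A' : Fin 5 → Set V, GoodTuple G A' → ¬ (⋃ i, A i) ⊂ (⋃ i, A' i)

/-- The set `B` of vertices outside `A` that are complete to `A`. -/
def Bset {V : Type*} (G : SimpleGraph V) (A : Fin 5 → Set V) : Set V :=
  {v | v ∉ (⋃ i, A i) ∧ ∀ a ∈ ⋃ i, A i, G.Adj v a}


section Statement11Aux

variable {V : Type*} {G : SimpleGraph V}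

private lemma house_adj_iff' (a b : Fin 5) : house.Adj a b ↔
    ((a,b) ∈ [((0:Fin 5),(2:Fin 5)),(2,0),(0,3),(3,0),(0,4),(4,0),(1,3),(3,1),(1,4),(4,1),(2,4),(4,2)]) := by
  fin_cases a <;> fin_cases b <;> simp [house, SimpleGraph.pathGraph_adj] <;> decide

private lemma house_apply (hH : FreeOf G house) {u w z x b0 : V}
    (e1 : G.Adj u z) (e2 : G.Adj u x) (e3 : G.Adj u b0) (e4 : G.Adj w x)
    (e5 : G.Adj w b0) (e6 : G.Adj z b0)
    (n1 : ¬ G.Adj u w) (n2 : ¬ G.Adj w z) (n3 : ¬ G.Adj z x) (n4 : ¬ G.Adj x b0)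
    (d1 : u ≠ w) (d2 : w ≠ z) (d3 : z ≠ x) (d4 : x ≠ b0) : False := by
  have d02 : u ≠ z := G.ne_of_adj e1
  have d03 : u ≠ x := G.ne_of_adj e2
  have d04 : u ≠ b0 := G.ne_of_adj e3
  have d13 : w ≠ x := G.ne_of_adj e4
  have d14 : w ≠ b0 := G.ne_of_adj e5
  have d24 : z ≠ b0 := G.ne_of_adj e6
  apply hH
  refine ⟨⟨![u, w, z, x, b0], ?_⟩, ?_⟩
  · intro a b hab
    fin_cases a <;> fin_cases b <;> simp_all
  · intro a b
    rw [house_adj_iff']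
    fin_cases a <;> fin_cases b <;>
      simp only [Matrix.cons_val_zero, Matrix.cons_val_one, Matrix.head_cons,
        Matrix.cons_val_two, Matrix.tail_cons, Matrix.cons_val_three, Matrix.cons_val_four,
        List.mem_cons, List.not_mem_nil, Prod.mk.injEq] <;>
      first
      | exact iff_of_false (G.irrefl) (by decide)
      | exact iff_of_true e1 (by decide) | exact iff_of_true e1.symm (by decide)
      | exact iff_of_true e2 (by decide) | exact iff_of_true e2.symm (by decide)
      | exact iff_of_true e3 (by decide) | exact iff_of_true e3.symm (by decide)
      | exact iff_of_true e4 (by decide) | exact iff_of_true e4.symm (by decide)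
      | exact iff_of_true e5 (by decide) | exact iff_of_true e5.symm (by decide)
      | exact iff_of_true e6 (by decide) | exact iff_of_true e6.symm (by decide)
      | exact iff_of_false n1 (by decide) | exact iff_of_false (fun h => n1 h.symm) (by decide)
      | exact iff_of_false n2 (by decide) | exact iff_of_false (fun h => n2 h.symm) (by decide)
      | exact iff_of_false n3 (by decide) | exact iff_of_false (fun h => n3 h.symm) (by decide)
      | exact iff_of_false n4 (by decide) | exact iff_of_false (fun h => n4 h.symm) (by decide)

private lemma bull_apply (hB : FreeOf G bull) {x α b0 z β : V}
    (exα : G.Adj x α) (eαb : G.Adj α b0) (ebz : G.Adj b0 z) (eαβ : G.Adj α β)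
    (ebβ : G.Adj b0 β)
    (nxb : ¬ G.Adj x b0) (nxz : ¬ G.Adj x z) (nxβ : ¬ G.Adj x β)
    (nαz : ¬ G.Adj α z) (nzβ : ¬ G.Adj z β)
    (dxb : x ≠ b0) (dxz : x ≠ z) (dxβ : x ≠ β) (dαz : α ≠ z) (dzβ : z ≠ β) : False := by
  have d01 : x ≠ α := G.ne_of_adj exα
  have d12 : α ≠ b0 := G.ne_of_adj eαb
  have d23 : b0 ≠ z := G.ne_of_adj ebz
  have d14 : α ≠ β := G.ne_of_adj eαβ
  have d24 : b0 ≠ β := G.ne_of_adj ebβ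
  apply hB
  refine ⟨⟨![x, α, b0, z, β], ?_⟩, ?_⟩
  · intro a b hab
    fin_cases a <;> fin_cases b <;> simp_all
  · intro a b
    fin_cases a <;> fin_cases b <;>
      simp [bull, SimpleGraph.fromEdgeSet_adj, Sym2.eq_iff] <;>
      first
        | assumption
        | (exact fun h => nxb h) | (exact fun h => nxz h) | (exact fun h => nxβ h)
        | (exact fun h => nαz h) | (exact fun h => nzβ h)
        | (exact fun h => nxb h.symm) | (exact fun h => nxz h.symm) | (exact fun h => nxβ h.symm)
        | (exact fun h => nαz h.symm) | (exact fun h => nzβ h.symm)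
        | (exact exα.symm) | (exact eαb.symm) | (exact ebz.symm) | (exact eαβ.symm) | (exact ebβ.symm)

private lemma bp (hB : FreeOf G bull) {x α b0 z β : V}
    (eαβ : G.Adj α β) (ebα : G.Adj b0 α) (ebβ : G.Adj b0 β)
    (exα : G.Adj x α) (nxβ : ¬ G.Adj x β) (nxb : ¬ G.Adj x b0)
    (ebz : G.Adj b0 z) (nzα : ¬ G.Adj z α) (nzβ : ¬ G.Adj z β)
    (dxb : x ≠ b0) (dxz : x ≠ z) (dxβ : x ≠ β) (dαz : α ≠ z) (dzβ : z ≠ β) :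
    G.Adj x z := by
  by_contra hxz
  exact bull_apply hB exα ebα.symm ebz eαβ ebβ nxb hxz nxβ
    (fun h => nzα h.symm) nzβ dxb dxz dxβ dαz dzβ

private lemma h1 (hH : FreeOf G house) {x u b0 w z : V}
    (exu : G.Adj x u) (exw : G.Adj x w) (ebu : G.Adj b0 u) (ebw : G.Adj b0 w)
    (nuw : ¬ G.Adj u w) (nxb : ¬ G.Adj x b0)
    (ezu : G.Adj z u) (ebz : G.Adj b0 z) (nzw : ¬ G.Adj z w)
    (duw : u ≠ w) (dwz : w ≠ z) (dzx : z ≠ x) (dxb : x ≠ b0) :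
    G.Adj x z := by
  by_contra hxz
  exact house_apply hH ezu.symm exu.symm ebu.symm exw.symm ebw.symm ebz.symm
    nuw (fun h => nzw h.symm) (fun h => hxz h.symm) nxb duw dwz dzx dxb

private lemma cSymm {S T : Set V} (h : CompleteTo G S T) : CompleteTo G T S :=
  fun t ht s hs => (h s hs t ht).symm

private lemma aSymm {S T : Set V} (h : AnticompleteTo G S T) : AnticompleteTo G T S :=
  fun t ht s hs hadj => h s hs t ht hadj.symm

private lemma mk5 {P : V → Prop} {T0 T1 T2 T3 T4 : Set V}
    (h0 : ∀ a ∈ T0, P a) (h1 : ∀ a ∈ T1, P a) (h2 : ∀ a ∈ T2, P a)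
    (h3 : ∀ a ∈ T3, P a) (h4 : ∀ a ∈ T4, P a) :
    ∀ k : Fin 5, ∀ a ∈ ![T0,T1,T2,T3,T4] k, P a := by
  intro k
  fin_cases k <;> simpa

/-- Core for a mixed pair in positions (0,2): `x ~ u ∈ S0`, `x ≁ w ∈ S2`.
Works in both the complete and anticomplete cases. -/
private lemma core02 (hH : FreeOf G house) (hB : FreeOf G bull)
    {S0 S1 S2 S3 S4 : Set V} {b0 x u w : V}
    (hne1 : S1.Nonempty) (hne3 : S3.Nonempty) (hne4 : S4.Nonempty)
    (cE01 : CompleteTo G S0 S1) (cE12 : CompleteTo G S1 S2)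
    (n41 : AnticompleteTo G S4 S1) (n24 : AnticompleteTo G S2 S4)
    (n30 : AnticompleteTo G S3 S0) (n13 : AnticompleteTo G S1 S3)
    (d14 : ∀ a ∈ S1, ∀ b ∈ S4, a ≠ b) (d42 : ∀ a ∈ S4, ∀ b ∈ S2, a ≠ b)
    (d03 : ∀ a ∈ S0, ∀ b ∈ S3, a ≠ b) (d31 : ∀ a ∈ S3, ∀ b ∈ S1, a ≠ b)
    (hb0 : ∀ k : Fin 5, ∀ a ∈ ![S0,S1,S2,S3,S4] k, G.Adj b0 a)
    (hxs : ∀ k : Fin 5, ∀ a ∈ ![S0,S1,S2,S3,S4] k, x ≠ a)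
    (hxb : ¬ G.Adj x b0) (dxb : x ≠ b0)
    (hu : u ∈ S0) (hxu : G.Adj x u) (hw : w ∈ S2) (hxw : ¬ G.Adj x w) : False := by
  by_cases hc : ∃ z1 ∈ S1, G.Adj x z1
  · obtain ⟨z1, hz1, hxz1⟩ := hc
    obtain ⟨z4, hz4⟩ := hne4
    have hxz4 : G.Adj x z4 :=
      bp hB (cE12 z1 hz1 w hw) (hb0 1 z1 hz1) (hb0 2 w hw) hxz1 hxw hxb
        (hb0 4 z4 hz4) (n41 z4 hz4 z1 hz1) (fun h => n24 w hw z4 hz4 h.symm)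
        dxb (hxs 4 z4 hz4) (hxs 2 w hw) (d14 z1 hz1 z4 hz4) (d42 z4 hz4 w hw)
    exact hxw <| h1 hH hxz1 hxz4 (hb0 1 z1 hz1) (hb0 4 z4 hz4)
      (fun h => n41 z4 hz4 z1 hz1 h.symm) hxb
      (cE12 z1 hz1 w hw).symm (hb0 2 w hw) (n24 w hw z4 hz4)
      (d14 z1 hz1 z4 hz4) (d42 z4 hz4 w hw) (fun h => hxs 2 w hw h.symm) dxb
  · push_neg at hc
    obtain ⟨w1, hw1⟩ := hne1
    obtain ⟨z3, hz3⟩ := hne3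
    have hxz3 : G.Adj x z3 :=
      bp hB (cE01 u hu w1 hw1) (hb0 0 u hu) (hb0 1 w1 hw1) hxu (hc w1 hw1) hxb
        (hb0 3 z3 hz3) (n30 z3 hz3 u hu) (fun h => n13 w1 hw1 z3 hz3 h.symm)
        dxb (hxs 3 z3 hz3) (hxs 1 w1 hw1) (d03 u hu z3 hz3) (d31 z3 hz3 w1 hw1)
    exact hc w1 hw1 <| h1 hH hxu hxz3 (hb0 0 u hu) (hb0 3 z3 hz3)
      (fun h => n30 z3 hz3 u hu h.symm) hxb
      (cE01 u hu w1 hw1).symm (hb0 1 w1 hw1) (n13 w1 hw1 z3 hz3)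
      (d03 u hu z3 hz3) (d31 z3 hz3 w1 hw1) (fun h => hxs 1 w1 hw1 h.symm) dxb

/-- Anticomplete case, mixed pair in positions (2,0): `x ~ u ∈ S2`, `x ≁ w ∈ S0`. -/
private lemma coreA2 (hH : FreeOf G house) (hB : FreeOf G bull)
    {S0 S1 S2 S3 S4 : Set V} {b0 x u w : V}
    (hne1 : S1.Nonempty) (hne4 : S4.Nonempty)
    (cE01 : CompleteTo G S0 S1) (cE12 : CompleteTo G S1 S2)
    (n41 : AnticompleteTo G S4 S1) (n40 : AnticompleteTo G S4 S0)
    (n24 : AnticompleteTo G S2 S4)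
    (d14 : ∀ a ∈ S1, ∀ b ∈ S4, a ≠ b) (d40 : ∀ a ∈ S4, ∀ b ∈ S0, a ≠ b)
    (d24 : ∀ a ∈ S2, ∀ b ∈ S4, a ≠ b)
    (hb0 : ∀ k : Fin 5, ∀ a ∈ ![S0,S1,S2,S3,S4] k, G.Adj b0 a)
    (hxs : ∀ k : Fin 5, ∀ a ∈ ![S0,S1,S2,S3,S4] k, x ≠ a)
    (hxb : ¬ G.Adj x b0) (dxb : x ≠ b0)
    (hu : u ∈ S2) (hxu : G.Adj x u) (hw : w ∈ S0) (hxw : ¬ G.Adj x w) : False := by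
  obtain ⟨z4, hz4⟩ := hne4
  by_cases hc : ∃ z1 ∈ S1, G.Adj x z1
  · obtain ⟨z1, hz1, hxz1⟩ := hc
    have hxz4 : G.Adj x z4 :=
      bp hB (cE01 w hw z1 hz1).symm (hb0 1 z1 hz1) (hb0 0 w hw) hxz1 hxw hxb
        (hb0 4 z4 hz4) (n41 z4 hz4 z1 hz1) (n40 z4 hz4 w hw)
        dxb (hxs 4 z4 hz4) (hxs 0 w hw) (d14 z1 hz1 z4 hz4)
        (d40 z4 hz4 w hw)
    exact hxw <| h1 hH hxz1 hxz4 (hb0 1 z1 hz1) (hb0 4 z4 hz4)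
      (fun h => n41 z4 hz4 z1 hz1 h.symm) hxb
      (cE01 w hw z1 hz1) (hb0 0 w hw) (fun h => n40 z4 hz4 w hw h.symm)
      (d14 z1 hz1 z4 hz4) (d40 z4 hz4 w hw) (fun h => hxs 0 w hw h.symm) dxb
  · push_neg at hc
    obtain ⟨w1, hw1⟩ := hne1
    have hxz4 : G.Adj x z4 :=
      bp hB (cE12 w1 hw1 u hu).symm (hb0 2 u hu) (hb0 1 w1 hw1) hxu (hc w1 hw1) hxb
        (hb0 4 z4 hz4) (fun h => n24 u hu z4 hz4 h.symm) (n41 z4 hz4 w1 hw1)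
        dxb (hxs 4 z4 hz4) (hxs 1 w1 hw1) (d24 u hu z4 hz4)
        ((d14 w1 hw1 z4 hz4).symm)
    exact hc w1 hw1 <| h1 hH hxu hxz4 (hb0 2 u hu) (hb0 4 z4 hz4)
      (n24 u hu z4 hz4) hxb
      (cE12 w1 hw1 u hu) (hb0 1 w1 hw1) (fun h => n41 z4 hz4 w1 hw1 h.symm)
      (d24 u hu z4 hz4) ((d14 w1 hw1 z4 hz4).symm)
      (fun h => hxs 1 w1 hw1 h.symm) dxb

/-- Anticomplete case, mixed pair in positions (1,3): `x ~ u ∈ S1`, `x ≁ w ∈ S3`. -/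
private lemma coreA3 (hH : FreeOf G house) (hB : FreeOf G bull)
    {S0 S1 S2 S3 S4 : Set V} {b0 x u w : V}
    (hne0 : S0.Nonempty) (hne2 : S2.Nonempty) (hne4 : S4.Nonempty)
    (cE12 : CompleteTo G S1 S2) (cE23 : CompleteTo G S2 S3)
    (n02 : AnticompleteTo G S0 S2) (n30 : AnticompleteTo G S3 S0)
    (n41 : AnticompleteTo G S4 S1) (n24 : AnticompleteTo G S2 S4)
    (d02 : ∀ a ∈ S0, ∀ b ∈ S2, a ≠ b) (d03 : ∀ a ∈ S0, ∀ b ∈ S3, a ≠ b)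
    (d14 : ∀ a ∈ S1, ∀ b ∈ S4, a ≠ b) (d24 : ∀ a ∈ S2, ∀ b ∈ S4, a ≠ b)
    (hb0 : ∀ k : Fin 5, ∀ a ∈ ![S0,S1,S2,S3,S4] k, G.Adj b0 a)
    (hxs : ∀ k : Fin 5, ∀ a ∈ ![S0,S1,S2,S3,S4] k, x ≠ a)
    (hxb : ¬ G.Adj x b0) (dxb : x ≠ b0)
    (hu : u ∈ S1) (hxu : G.Adj x u) (hw : w ∈ S3) (hxw : ¬ G.Adj x w) : False := by
  by_cases hc : ∃ z2 ∈ S2, G.Adj x z2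
  · obtain ⟨z2, hz2, hxz2⟩ := hc
    obtain ⟨z0, hz0⟩ := hne0
    have hxz0 : G.Adj x z0 :=
      bp hB (cE23 z2 hz2 w hw) (hb0 2 z2 hz2) (hb0 3 w hw) hxz2 hxw hxb
        (hb0 0 z0 hz0) (n02 z0 hz0 z2 hz2) (fun h => n30 w hw z0 hz0 h.symm)
        dxb (hxs 0 z0 hz0) (hxs 3 w hw)
        ((d02 z0 hz0 z2 hz2).symm) (d03 z0 hz0 w hw)
    exact hxw <| h1 hH hxz2 hxz0 (hb0 2 z2 hz2) (hb0 0 z0 hz0)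
      (fun h => n02 z0 hz0 z2 hz2 h.symm) hxb
      (cE23 z2 hz2 w hw).symm (hb0 3 w hw) (n30 w hw z0 hz0)
      ((d02 z0 hz0 z2 hz2).symm) (d03 z0 hz0 w hw)
      (fun h => hxs 3 w hw h.symm) dxb
  · push_neg at hc
    obtain ⟨w2, hw2⟩ := hne2
    obtain ⟨z4, hz4⟩ := hne4
    have hxz4 : G.Adj x z4 :=
      bp hB (cE12 u hu w2 hw2) (hb0 1 u hu) (hb0 2 w2 hw2) hxu (hc w2 hw2) hxb
        (hb0 4 z4 hz4) (n41 z4 hz4 u hu) (fun h => n24 w2 hw2 z4 hz4 h.symm)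
        dxb (hxs 4 z4 hz4) (hxs 2 w2 hw2) (d14 u hu z4 hz4)
        ((d24 w2 hw2 z4 hz4).symm)
    exact hc w2 hw2 <| h1 hH hxu hxz4 (hb0 1 u hu) (hb0 4 z4 hz4)
      (fun h => n41 z4 hz4 u hu h.symm) hxb
      (cE12 u hu w2 hw2).symm (hb0 2 w2 hw2) (n24 w2 hw2 z4 hz4)
      (d14 u hu z4 hz4) ((d24 w2 hw2 z4 hz4).symm)
      (fun h => hxs 2 w2 hw2 h.symm) dxb

/-- Anticomplete case, mixed pair in positions (0,3): `x ~ u ∈ S0`, `x ≁ w ∈ S3`. -/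
private lemma coreA4 (hH : FreeOf G house) (hB : FreeOf G bull)
    {S0 S1 S2 S3 S4 : Set V} {b0 x u w : V}
    (hne1 : S1.Nonempty) (hne2 : S2.Nonempty) (hne3 : S3.Nonempty) (hne4 : S4.Nonempty)
    (cE01 : CompleteTo G S0 S1) (cE12 : CompleteTo G S1 S2)
    (cE23 : CompleteTo G S2 S3) (cE34 : CompleteTo G S3 S4)
    (n40 : AnticompleteTo G S4 S0) (n30 : AnticompleteTo G S3 S0)
    (n13 : AnticompleteTo G S1 S3) (n41 : AnticompleteTo G S4 S1)
    (n02 : AnticompleteTo G S0 S2) (n24 : AnticompleteTo G S2 S4)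
    (d40 : ∀ a ∈ S4, ∀ b ∈ S0, a ≠ b) (d03 : ∀ a ∈ S0, ∀ b ∈ S3, a ≠ b)
    (d13 : ∀ a ∈ S1, ∀ b ∈ S3, a ≠ b) (d14 : ∀ a ∈ S1, ∀ b ∈ S4, a ≠ b)
    (d02 : ∀ a ∈ S0, ∀ b ∈ S2, a ≠ b) (d24 : ∀ a ∈ S2, ∀ b ∈ S4, a ≠ b)
    (hb0 : ∀ k : Fin 5, ∀ a ∈ ![S0,S1,S2,S3,S4] k, G.Adj b0 a)
    (hxs : ∀ k : Fin 5, ∀ a ∈ ![S0,S1,S2,S3,S4] k, x ≠ a)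
    (hxb : ¬ G.Adj x b0) (dxb : x ≠ b0)
    (hu : u ∈ S0) (hxu : G.Adj x u) (hw : w ∈ S3) (hxw : ¬ G.Adj x w) : False := by
  by_cases hc4 : ∃ z4 ∈ S4, G.Adj x z4
  · obtain ⟨z4, hz4, hxz4⟩ := hc4
    exact hxw <| h1 hH hxz4 hxu (hb0 4 z4 hz4) (hb0 0 u hu)
      (n40 z4 hz4 u hu) hxb
      (cE34 w hw z4 hz4) (hb0 3 w hw) (n30 w hw u hu)
      (d40 z4 hz4 u hu) (d03 u hu w hw) (fun h => hxs 3 w hw h.symm) dxb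
  · push_neg at hc4
    by_cases hc3 : ∃ z3 ∈ S3, G.Adj x z3
    · obtain ⟨z3, hz3, hxz3⟩ := hc3
      obtain ⟨w4, hw4⟩ := hne4
      obtain ⟨z1, hz1⟩ := hne1
      have hxz1 : G.Adj x z1 :=
        bp hB (cE34 z3 hz3 w4 hw4) (hb0 3 z3 hz3) (hb0 4 w4 hw4) hxz3 (hc4 w4 hw4) hxb
          (hb0 1 z1 hz1) (n13 z1 hz1 z3 hz3) (fun h => n41 w4 hw4 z1 hz1 h.symm)
          dxb (hxs 1 z1 hz1) (hxs 4 w4 hw4) ((d13 z1 hz1 z3 hz3).symm) (d14 z1 hz1 w4 hw4)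
      exact hc4 w4 hw4 <| h1 hH hxz3 hxz1 (hb0 3 z3 hz3) (hb0 1 z1 hz1)
        (fun h => n13 z1 hz1 z3 hz3 h.symm) hxb
        (cE34 z3 hz3 w4 hw4).symm (hb0 4 w4 hw4) (n41 w4 hw4 z1 hz1)
        ((d13 z1 hz1 z3 hz3).symm) (d14 z1 hz1 w4 hw4)
        (fun h => hxs 4 w4 hw4 h.symm) dxb
    · push_neg at hc3
      by_cases hc2 : ∃ z2 ∈ S2, G.Adj x z2
      · obtain ⟨z2, hz2, hxz2⟩ := hc2
        obtain ⟨z3, hz3⟩ := hne3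
        exact hc3 z3 hz3 <| h1 hH hxz2 hxu (hb0 2 z2 hz2) (hb0 0 u hu)
          (fun h => n02 u hu z2 hz2 h.symm) hxb
          (cE23 z2 hz2 z3 hz3).symm (hb0 3 z3 hz3) (n30 z3 hz3 u hu)
          ((d02 u hu z2 hz2).symm) (d03 u hu z3 hz3) (fun h => hxs 3 z3 hz3 h.symm) dxb
      · push_neg at hc2
        by_cases hc1 : ∃ z1 ∈ S1, G.Adj x z1
        · obtain ⟨z1, hz1, hxz1⟩ := hc1
          obtain ⟨w2, hw2⟩ := hne2
          obtain ⟨z4, hz4⟩ := hne4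
          exact hc4 z4 hz4 <|
            bp hB (cE12 z1 hz1 w2 hw2) (hb0 1 z1 hz1) (hb0 2 w2 hw2) hxz1 (hc2 w2 hw2) hxb
              (hb0 4 z4 hz4) (n41 z4 hz4 z1 hz1) (fun h => n24 w2 hw2 z4 hz4 h.symm)
              dxb (hxs 4 z4 hz4) (hxs 2 w2 hw2) (d14 z1 hz1 z4 hz4) ((d24 w2 hw2 z4 hz4).symm)
        · push_neg at hc1
          obtain ⟨w1, hw1⟩ := hne1
          obtain ⟨z3, hz3⟩ := hne3
          exact hc3 z3 hz3 <|
            bp hB (cE01 u hu w1 hw1) (hb0 0 u hu) (hb0 1 w1 hw1) hxu (hc1 w1 hw1) hxb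
              (hb0 3 z3 hz3) (n30 z3 hz3 u hu) (fun h => n13 w1 hw1 z3 hz3 h.symm)
              dxb (hxs 3 z3 hz3) (hxs 1 w1 hw1) (d03 u hu z3 hz3) ((d13 w1 hw1 z3 hz3).symm)

/-- Anticomplete case, mixed pair in positions (3,0): `x ~ u ∈ S3`, `x ≁ w ∈ S0`. -/
private lemma coreA5 (hH : FreeOf G house) (hB : FreeOf G bull)
    {S0 S1 S2 S3 S4 : Set V} {b0 x u w : V}
    (hne1 : S1.Nonempty) (hne2 : S2.Nonempty) (hne4 : S4.Nonempty)
    (cE01 : CompleteTo G S0 S1) (cE12 : CompleteTo G S1 S2) (cE23 : CompleteTo G S2 S3)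
    (n13 : AnticompleteTo G S1 S3) (n30 : AnticompleteTo G S3 S0)
    (n24 : AnticompleteTo G S2 S4) (n41 : AnticompleteTo G S4 S1)
    (n02 : AnticompleteTo G S0 S2)
    (d13 : ∀ a ∈ S1, ∀ b ∈ S3, a ≠ b) (d30 : ∀ a ∈ S3, ∀ b ∈ S0, a ≠ b)
    (d24 : ∀ a ∈ S2, ∀ b ∈ S4, a ≠ b) (d14 : ∀ a ∈ S1, ∀ b ∈ S4, a ≠ b)
    (d02 : ∀ a ∈ S0, ∀ b ∈ S2, a ≠ b)
    (hb0 : ∀ k : Fin 5, ∀ a ∈ ![S0,S1,S2,S3,S4] k, G.Adj b0 a)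
    (hxs : ∀ k : Fin 5, ∀ a ∈ ![S0,S1,S2,S3,S4] k, x ≠ a)
    (hxb : ¬ G.Adj x b0) (dxb : x ≠ b0)
    (hu : u ∈ S3) (hxu : G.Adj x u) (hw : w ∈ S0) (hxw : ¬ G.Adj x w) : False := by
  by_cases hc1 : ∃ z1 ∈ S1, G.Adj x z1
  · obtain ⟨z1, hz1, hxz1⟩ := hc1
    exact hxw <| h1 hH hxz1 hxu (hb0 1 z1 hz1) (hb0 3 u hu)
      (n13 z1 hz1 u hu) hxb
      (cE01 w hw z1 hz1) (hb0 0 w hw) (fun h => n30 u hu w hw h.symm)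
      (d13 z1 hz1 u hu) (d30 u hu w hw) (fun h => hxs 0 w hw h.symm) dxb
  · push_neg at hc1
    obtain ⟨w1, hw1⟩ := hne1
    by_cases hc2 : ∃ z2 ∈ S2, G.Adj x z2
    · obtain ⟨z2, hz2, hxz2⟩ := hc2
      obtain ⟨z4, hz4⟩ := hne4
      have hxz4 : G.Adj x z4 :=
        bp hB (cE12 w1 hw1 z2 hz2).symm (hb0 2 z2 hz2) (hb0 1 w1 hw1) hxz2 (hc1 w1 hw1) hxb
          (hb0 4 z4 hz4) (fun h => n24 z2 hz2 z4 hz4 h.symm) (n41 z4 hz4 w1 hw1)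
          dxb (hxs 4 z4 hz4) (hxs 1 w1 hw1) (d24 z2 hz2 z4 hz4) ((d14 w1 hw1 z4 hz4).symm)
      exact hc1 w1 hw1 <| h1 hH hxz2 hxz4 (hb0 2 z2 hz2) (hb0 4 z4 hz4)
        (n24 z2 hz2 z4 hz4) hxb
        (cE12 w1 hw1 z2 hz2) (hb0 1 w1 hw1) (fun h => n41 z4 hz4 w1 hw1 h.symm)
        (d24 z2 hz2 z4 hz4) ((d14 w1 hw1 z4 hz4).symm) (fun h => hxs 1 w1 hw1 h.symm) dxb
    · push_neg at hc2
      obtain ⟨w2, hw2⟩ := hne2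
      exact hxw <|
        bp hB (cE23 w2 hw2 u hu).symm (hb0 3 u hu) (hb0 2 w2 hw2) hxu (hc2 w2 hw2) hxb
          (hb0 0 w hw) (fun h => n30 u hu w hw h.symm) (n02 w hw w2 hw2)
          dxb (hxs 0 w hw) (hxs 2 w2 hw2) (d30 u hu w hw) ((d02 w hw w2 hw2))

/-- If `x` has a neighbour and a non-neighbour in `A`, then some pair of
positions at "distance 2" around the cycle carries a neighbour/non-neighbour pair. -/
private lemma pairLem (A : Fin 5 → Set V) (hNE : ∀ i, (A i).Nonempty)
    {x a a' : V} {i j : Fin 5}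
    (ha : a ∈ A i) (hxa : G.Adj x a) (ha' : a' ∈ A j) (hxa' : ¬ G.Adj x a') :
    ((∃ u ∈ A 0, G.Adj x u) ∧ (∃ w ∈ A 2, ¬ G.Adj x w)) ∨
    ((∃ u ∈ A 1, G.Adj x u) ∧ (∃ w ∈ A 3, ¬ G.Adj x w)) ∨
    ((∃ u ∈ A 2, G.Adj x u) ∧ (∃ w ∈ A 4, ¬ G.Adj x w)) ∨
    ((∃ u ∈ A 3, G.Adj x u) ∧ (∃ w ∈ A 0, ¬ G.Adj x w)) ∨
    ((∃ u ∈ A 4, G.Adj x u) ∧ (∃ w ∈ A 1, ¬ G.Adj x w)) ∨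
    ((∃ u ∈ A 2, G.Adj x u) ∧ (∃ w ∈ A 0, ¬ G.Adj x w)) ∨
    ((∃ u ∈ A 3, G.Adj x u) ∧ (∃ w ∈ A 1, ¬ G.Adj x w)) ∨
    ((∃ u ∈ A 4, G.Adj x u) ∧ (∃ w ∈ A 2, ¬ G.Adj x w)) ∨
    ((∃ u ∈ A 0, G.Adj x u) ∧ (∃ w ∈ A 3, ¬ G.Adj x w)) ∨
    ((∃ u ∈ A 1, G.Adj x u) ∧ (∃ w ∈ A 4, ¬ G.Adj x w)) := by
  by_contra hno
  push_neg at hno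
  obtain ⟨h02, h13, h24, h30, h41, h20, h31, h42, h03, h14⟩ := hno
  -- `Pk` means: x has a neighbour in `A k`.
  have s02 : (∃ u ∈ A 0, G.Adj x u) → (∃ u ∈ A 2, G.Adj x u) := by
    rintro h; obtain ⟨w, hw⟩ := hNE 2; exact ⟨w, hw, h02 h w hw⟩
  have s13 : (∃ u ∈ A 1, G.Adj x u) → (∃ u ∈ A 3, G.Adj x u) := by
    rintro h; obtain ⟨w, hw⟩ := hNE 3; exact ⟨w, hw, h13 h w hw⟩
  have s24 : (∃ u ∈ A 2, G.Adj x u) → (∃ u ∈ A 4, G.Adj x u) := by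
    rintro h; obtain ⟨w, hw⟩ := hNE 4; exact ⟨w, hw, h24 h w hw⟩
  have s30 : (∃ u ∈ A 3, G.Adj x u) → (∃ u ∈ A 0, G.Adj x u) := by
    rintro h; obtain ⟨w, hw⟩ := hNE 0; exact ⟨w, hw, h30 h w hw⟩
  have s41 : (∃ u ∈ A 4, G.Adj x u) → (∃ u ∈ A 1, G.Adj x u) := by
    rintro h; obtain ⟨w, hw⟩ := hNE 1; exact ⟨w, hw, h41 h w hw⟩
  have hall : (∃ u ∈ A 0, G.Adj x u) ∧ (∃ u ∈ A 1, G.Adj x u) ∧ (∃ u ∈ A 2, G.Adj x u)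
      ∧ (∃ u ∈ A 3, G.Adj x u) ∧ (∃ u ∈ A 4, G.Adj x u) := by
    have hPi : ∃ u ∈ A i, G.Adj x u := ⟨a, ha, hxa⟩
    fin_cases i
    · exact ⟨hPi, s41 (s24 (s02 hPi)), s02 hPi, s13 (s41 (s24 (s02 hPi))), s24 (s02 hPi)⟩
    · exact ⟨s30 (s13 hPi), hPi, s02 (s30 (s13 hPi)), s13 hPi, s24 (s02 (s30 (s13 hPi)))⟩
    · exact ⟨s30 (s13 (s41 (s24 hPi))), s41 (s24 hPi), hPi, s13 (s41 (s24 hPi)), s24 hPi⟩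
    · exact ⟨s30 hPi, s41 (s24 (s02 (s30 hPi))), s02 (s30 hPi), hPi, s24 (s02 (s30 hPi))⟩
    · exact ⟨s30 (s13 (s41 hPi)), s41 hPi, s02 (s30 (s13 (s41 hPi))), s13 (s41 hPi), hPi⟩
  obtain ⟨P0, P1, P2, P3, P4⟩ := hall
  fin_cases j
  · exact hxa' (h30 P3 a' ha')
  · exact hxa' (h41 P4 a' ha')
  · exact hxa' (h02 P0 a' ha')
  · exact hxa' (h13 P1 a' ha')
  · exact hxa' (h24 P2 a' ha')

set_option maxHeartbeats 1000000 in
/-- A vertex outside `A`, non-adjacent to a vertex `b0` complete to `A`, cannot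
be "mixed" on `A`. -/
private lemma mixedKill (hH : FreeOf G house) (hB : FreeOf G bull) (A : Fin 5 → Set V)
    (hNE : ∀ i, (A i).Nonempty) (hDisj : Pairwise fun i j => Disjoint (A i) (A j))
    (hCompl : ∀ i : Fin 5, i ≠ 4 → CompleteTo G (A i) (A (i + 1)))
    (hAnti : ∀ i : Fin 5, AnticompleteTo G (A i) (A (i + 2)))
    (hLast : CompleteTo G (A 4) (A 0) ∨ AnticompleteTo G (A 4) (A 0))
    {b0 x a a' : V} {i j : Fin 5}
    (hb0 : ∀ v ∈ ⋃ k, A k, G.Adj b0 v) (hx : x ∉ ⋃ k, A k) (hxb : ¬ G.Adj x b0)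
    (ha : a ∈ A i) (hxa : G.Adj x a) (ha' : a' ∈ A j) (hxa' : ¬ G.Adj x a') : False := by
  have hbs : ∀ k : Fin 5, ∀ v ∈ A k, G.Adj b0 v :=
    fun k v hv => hb0 v (Set.mem_iUnion.2 ⟨k, hv⟩)
  have hxs : ∀ k : Fin 5, ∀ v ∈ A k, x ≠ v :=
    fun k v hv he => hx (he ▸ Set.mem_iUnion.2 ⟨k, hv⟩)
  have dxb : x ≠ b0 := fun he => hxa' (he ▸ hbs j a' ha')
  have dne : ∀ {p q : Fin 5}, p ≠ q → ∀ v ∈ A p, ∀ w ∈ A q, v ≠ w :=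
    fun hpq v hv w hw he => Set.disjoint_left.mp (hDisj hpq) hv (he ▸ hw)
  have e01 : CompleteTo G (A 0) (A 1) := hCompl 0 (by decide)
  have e12 : CompleteTo G (A 1) (A 2) := hCompl 1 (by decide)
  have e23 : CompleteTo G (A 2) (A 3) := hCompl 2 (by decide)
  have e34 : CompleteTo G (A 3) (A 4) := hCompl 3 (by decide)
  have a02 : AnticompleteTo G (A 0) (A 2) := hAnti 0
  have a13 : AnticompleteTo G (A 1) (A 3) := hAnti 1
  have a24 : AnticompleteTo G (A 2) (A 4) := hAnti 2
  have a30 : AnticompleteTo G (A 3) (A 0) := hAnti 3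
  have a41 : AnticompleteTo G (A 4) (A 1) := hAnti 4
  rcases pairLem A hNE ha hxa ha' hxa' with
    ⟨⟨u,hu,hxu⟩,⟨w,hw,hxw⟩⟩ | ⟨⟨u,hu,hxu⟩,⟨w,hw,hxw⟩⟩ | ⟨⟨u,hu,hxu⟩,⟨w,hw,hxw⟩⟩ |
    ⟨⟨u,hu,hxu⟩,⟨w,hw,hxw⟩⟩ | ⟨⟨u,hu,hxu⟩,⟨w,hw,hxw⟩⟩ | ⟨⟨u,hu,hxu⟩,⟨w,hw,hxw⟩⟩ |
    ⟨⟨u,hu,hxu⟩,⟨w,hw,hxw⟩⟩ | ⟨⟨u,hu,hxu⟩,⟨w,hw,hxw⟩⟩ | ⟨⟨u,hu,hxu⟩,⟨w,hw,hxw⟩⟩ |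
    ⟨⟨u,hu,hxu⟩,⟨w,hw,hxw⟩⟩
  -- (0,2)
  · rcases hLast with hC | hC
    · exact core02 hH hB (hNE 1) (hNE 3) (hNE 4) e01 e12 a41 a24 a30 a13
        (dne (by decide)) (dne (by decide)) (dne (by decide)) (dne (by decide))
        (mk5 (hbs 0) (hbs 1) (hbs 2) (hbs 3) (hbs 4))
        (mk5 (hxs 0) (hxs 1) (hxs 2) (hxs 3) (hxs 4)) hxb dxb hu hxu hw hxw
    · exact core02 hH hB (hNE 1) (hNE 3) (hNE 4) e01 e12 a41 a24 a30 a13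
        (dne (by decide)) (dne (by decide)) (dne (by decide)) (dne (by decide))
        (mk5 (hbs 0) (hbs 1) (hbs 2) (hbs 3) (hbs 4))
        (mk5 (hxs 0) (hxs 1) (hxs 2) (hxs 3) (hxs 4)) hxb dxb hu hxu hw hxw
  -- (1,3)
  · rcases hLast with hC | hC
    · exact core02 hH hB (hNE 2) (hNE 4) (hNE 0) e12 e23 a02 a30 a41 a24
        (dne (by decide)) (dne (by decide)) (dne (by decide)) (dne (by decide))
        (mk5 (hbs 1) (hbs 2) (hbs 3) (hbs 4) (hbs 0))
        (mk5 (hxs 1) (hxs 2) (hxs 3) (hxs 4) (hxs 0)) hxb dxb hu hxu hw hxw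
    · exact coreA3 hH hB (hNE 0) (hNE 2) (hNE 4) e12 e23 a02 a30 a41 a24
        (dne (by decide)) (dne (by decide)) (dne (by decide)) (dne (by decide))
        (mk5 (hbs 0) (hbs 1) (hbs 2) (hbs 3) (hbs 4))
        (mk5 (hxs 0) (hxs 1) (hxs 2) (hxs 3) (hxs 4)) hxb dxb hu hxu hw hxw
  -- (2,4)
  · rcases hLast with hC | hC
    · exact core02 hH hB (hNE 3) (hNE 0) (hNE 1) e23 e34 a13 a41 a02 a30
        (dne (by decide)) (dne (by decide)) (dne (by decide)) (dne (by decide))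
        (mk5 (hbs 2) (hbs 3) (hbs 4) (hbs 0) (hbs 1))
        (mk5 (hxs 2) (hxs 3) (hxs 4) (hxs 0) (hxs 1)) hxb dxb hu hxu hw hxw
    · exact coreA2 hH hB (hNE 3) (hNE 0) (cSymm e34) (cSymm e23) (aSymm a30) (aSymm hC)
        (aSymm a02)
        (dne (by decide)) (dne (by decide)) (dne (by decide))
        (mk5 (hbs 4) (hbs 3) (hbs 2) (hbs 1) (hbs 0))
        (mk5 (hxs 4) (hxs 3) (hxs 2) (hxs 1) (hxs 0)) hxb dxb hu hxu hw hxw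
  -- (3,0)
  · rcases hLast with hC | hC
    · exact core02 hH hB (hNE 4) (hNE 1) (hNE 2) e34 hC a24 a02 a13 a41
        (dne (by decide)) (dne (by decide)) (dne (by decide)) (dne (by decide))
        (mk5 (hbs 3) (hbs 4) (hbs 0) (hbs 1) (hbs 2))
        (mk5 (hxs 3) (hxs 4) (hxs 0) (hxs 1) (hxs 2)) hxb dxb hu hxu hw hxw
    · exact coreA5 hH hB (hNE 1) (hNE 2) (hNE 4) e01 e12 e23 a13 a30 a24 a41 a02
        (dne (by decide)) (dne (by decide)) (dne (by decide)) (dne (by decide))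
        (dne (by decide))
        (mk5 (hbs 0) (hbs 1) (hbs 2) (hbs 3) (hbs 4))
        (mk5 (hxs 0) (hxs 1) (hxs 2) (hxs 3) (hxs 4)) hxb dxb hu hxu hw hxw
  -- (4,1)
  · rcases hLast with hC | hC
    · exact core02 hH hB (hNE 0) (hNE 2) (hNE 3) hC e01 a30 a13 a24 a02
        (dne (by decide)) (dne (by decide)) (dne (by decide)) (dne (by decide))
        (mk5 (hbs 4) (hbs 0) (hbs 1) (hbs 2) (hbs 3))
        (mk5 (hxs 4) (hxs 0) (hxs 1) (hxs 2) (hxs 3)) hxb dxb hu hxu hw hxw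
    · exact coreA4 hH hB (hNE 3) (hNE 2) (hNE 1) (hNE 0) (cSymm e34) (cSymm e23)
        (cSymm e12) (cSymm e01) (aSymm hC) (aSymm a41) (aSymm a13) (aSymm a30)
        (aSymm a24) (aSymm a02)
        (dne (by decide)) (dne (by decide)) (dne (by decide)) (dne (by decide))
        (dne (by decide)) (dne (by decide))
        (mk5 (hbs 4) (hbs 3) (hbs 2) (hbs 1) (hbs 0))
        (mk5 (hxs 4) (hxs 3) (hxs 2) (hxs 1) (hxs 0)) hxb dxb hu hxu hw hxw
  -- (2,0)
  · rcases hLast with hC | hC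
    · exact core02 hH hB (hNE 1) (hNE 4) (hNE 3) (cSymm e12) (cSymm e01) (aSymm a13)
        (aSymm a30) (aSymm a24) (aSymm a41)
        (dne (by decide)) (dne (by decide)) (dne (by decide)) (dne (by decide))
        (mk5 (hbs 2) (hbs 1) (hbs 0) (hbs 4) (hbs 3))
        (mk5 (hxs 2) (hxs 1) (hxs 0) (hxs 4) (hxs 3)) hxb dxb hu hxu hw hxw
    · exact coreA2 hH hB (hNE 1) (hNE 4) e01 e12 a41 hC a24
        (dne (by decide)) (dne (by decide)) (dne (by decide))
        (mk5 (hbs 0) (hbs 1) (hbs 2) (hbs 3) (hbs 4))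
        (mk5 (hxs 0) (hxs 1) (hxs 2) (hxs 3) (hxs 4)) hxb dxb hu hxu hw hxw
  -- (3,1)
  · rcases hLast with hC | hC
    · exact core02 hH hB (hNE 2) (hNE 0) (hNE 4) (cSymm e23) (cSymm e12) (aSymm a24)
        (aSymm a41) (aSymm a30) (aSymm a02)
        (dne (by decide)) (dne (by decide)) (dne (by decide)) (dne (by decide))
        (mk5 (hbs 3) (hbs 2) (hbs 1) (hbs 0) (hbs 4))
        (mk5 (hxs 3) (hxs 2) (hxs 1) (hxs 0) (hxs 4)) hxb dxb hu hxu hw hxw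
    · exact coreA3 hH hB (hNE 4) (hNE 2) (hNE 0) (cSymm e23) (cSymm e12) (aSymm a24)
        (aSymm a41) (aSymm a30) (aSymm a02)
        (dne (by decide)) (dne (by decide)) (dne (by decide)) (dne (by decide))
        (mk5 (hbs 4) (hbs 3) (hbs 2) (hbs 1) (hbs 0))
        (mk5 (hxs 4) (hxs 3) (hxs 2) (hxs 1) (hxs 0)) hxb dxb hu hxu hw hxw
  -- (4,2)
  · rcases hLast with hC | hC
    · exact core02 hH hB (hNE 3) (hNE 1) (hNE 0) (cSymm e34) (cSymm e23) (aSymm a30)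
        (aSymm a02) (aSymm a41) (aSymm a13)
        (dne (by decide)) (dne (by decide)) (dne (by decide)) (dne (by decide))
        (mk5 (hbs 4) (hbs 3) (hbs 2) (hbs 1) (hbs 0))
        (mk5 (hxs 4) (hxs 3) (hxs 2) (hxs 1) (hxs 0)) hxb dxb hu hxu hw hxw
    · exact core02 hH hB (hNE 3) (hNE 1) (hNE 0) (cSymm e34) (cSymm e23) (aSymm a30)
        (aSymm a02) (aSymm a41) (aSymm a13)
        (dne (by decide)) (dne (by decide)) (dne (by decide)) (dne (by decide))
        (mk5 (hbs 4) (hbs 3) (hbs 2) (hbs 1) (hbs 0))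
        (mk5 (hxs 4) (hxs 3) (hxs 2) (hxs 1) (hxs 0)) hxb dxb hu hxu hw hxw
  -- (0,3)
  · rcases hLast with hC | hC
    · exact core02 hH hB (hNE 4) (hNE 2) (hNE 1) (cSymm hC) (cSymm e34) (aSymm a41)
        (aSymm a13) (aSymm a02) (aSymm a24)
        (dne (by decide)) (dne (by decide)) (dne (by decide)) (dne (by decide))
        (mk5 (hbs 0) (hbs 4) (hbs 3) (hbs 2) (hbs 1))
        (mk5 (hxs 0) (hxs 4) (hxs 3) (hxs 2) (hxs 1)) hxb dxb hu hxu hw hxw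
    · exact coreA4 hH hB (hNE 1) (hNE 2) (hNE 3) (hNE 4) e01 e12 e23 e34 hC a30 a13
        a41 a02 a24
        (dne (by decide)) (dne (by decide)) (dne (by decide)) (dne (by decide))
        (dne (by decide)) (dne (by decide))
        (mk5 (hbs 0) (hbs 1) (hbs 2) (hbs 3) (hbs 4))
        (mk5 (hxs 0) (hxs 1) (hxs 2) (hxs 3) (hxs 4)) hxb dxb hu hxu hw hxw
  -- (1,4)
  · rcases hLast with hC | hC
    · exact core02 hH hB (hNE 0) (hNE 3) (hNE 2) (cSymm e01) (cSymm hC) (aSymm a02)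
        (aSymm a24) (aSymm a13) (aSymm a30)
        (dne (by decide)) (dne (by decide)) (dne (by decide)) (dne (by decide))
        (mk5 (hbs 1) (hbs 0) (hbs 4) (hbs 3) (hbs 2))
        (mk5 (hxs 1) (hxs 0) (hxs 4) (hxs 3) (hxs 2)) hxb dxb hu hxu hw hxw
    · exact coreA5 hH hB (hNE 3) (hNE 2) (hNE 0) (cSymm e34) (cSymm e23) (cSymm e12)
        (aSymm a13) (aSymm a41) (aSymm a02) (aSymm a30) (aSymm a24)
        (dne (by decide)) (dne (by decide)) (dne (by decide)) (dne (by decide))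
        (dne (by decide))
        (mk5 (hbs 4) (hbs 3) (hbs 2) (hbs 1) (hbs 0))
        (mk5 (hxs 4) (hxs 3) (hxs 2) (hxs 1) (hxs 0)) hxb dxb hu hxu hw hxw

/-- Vertices reachable from `A` in at most `n` steps through vertices outside `B`. -/
def reachN (G : SimpleGraph V) (A : Fin 5 → Set V) : ℕ → V → Prop
  | 0, v => v ∈ ⋃ i, A i
  | n+1, v => reachN G A n v ∨ ∃ u, reachN G A n u ∧ G.Adj u v ∧ v ∉ Bset G A

private lemma reachN_mono {A : Fin 5 → Set V} {n v} (h : reachN G A n v) : reachN G A (n+1) v :=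
  Or.inl h

private lemma reachN_not_B {A : Fin 5 → Set V} :
    ∀ n v, reachN G A n v → v ∈ (⋃ i, A i) ∨ v ∉ Bset G A := by
  intro n
  induction n with
  | zero => exact fun v hv => Or.inl hv
  | succ n ih =>
    rintro v (hv | ⟨u, _, _, hvB⟩)
    · exact ih v hv
    · exact Or.inr hvB

/-- Main induction: every vertex reachable from `A` avoiding `B` is complete to `B`. -/
private lemma reach_complete (hH : FreeOf G house) (hB : FreeOf G bull) (A : Fin 5 → Set V)
    (hNE : ∀ i, (A i).Nonempty) (hDisj : Pairwise fun i j => Disjoint (A i) (A j))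
    (hCompl : ∀ i : Fin 5, i ≠ 4 → CompleteTo G (A i) (A (i + 1)))
    (hAnti : ∀ i : Fin 5, AnticompleteTo G (A i) (A (i + 2)))
    (hLast : CompleteTo G (A 4) (A 0) ∨ AnticompleteTo G (A 4) (A 0)) :
    ∀ n v, reachN G A n v → ∀ b0 ∈ Bset G A, G.Adj b0 v := by
  intro n
  induction n using Nat.strong_induction_on with
  | _ n IH =>
  intro v hv b0 hb0
  by_cases hlow : ∃ k < n, reachN G A k v
  · obtain ⟨k, hk, hv'⟩ := hlow
    exact IH k hk v hv' b0 hb0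
  · push_neg at hlow
    match n, hv with
    | 0, hv => exact hb0.2 v hv
    | n+1, Or.inl hv' => exact absurd hv' (hlow n (Nat.lt_succ_self n))
    | n+1, Or.inr ⟨u, hu, huv, hvB⟩ =>
      -- v is not in A
      have hvA : v ∉ ⋃ i, A i := fun hvA => hlow 0 (Nat.succ_pos n) hvA
      by_contra hbv
      have hxb : ¬ G.Adj v b0 := fun h => hbv h.symm
      by_cases hmix : ∃ k : Fin 5, ∃ α ∈ A k, G.Adj v α
      · -- v has a neighbour in A; since v ∉ A ∪ B it is mixed
        obtain ⟨k, α, hα, hvα⟩ := hmix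
        have : ∃ a' ∈ ⋃ i, A i, ¬ G.Adj v a' := by
          by_contra hall
          push_neg at hall
          exact hvB ⟨hvA, hall⟩
        obtain ⟨a', ha', hva'⟩ := this
        obtain ⟨jj, ha'⟩ := Set.mem_iUnion.1 ha'
        exact mixedKill hH hB A hNE hDisj hCompl hAnti hLast hb0.2 hvA hxb hα hvα ha' hva'
      · -- v is anticomplete to A
        push_neg at hmix
        have hW : ∀ (k : Fin 5), ∀ α ∈ A k, ¬ G.Adj v α := hmix
        -- the parent u is not in A
        have huA : u ∉ ⋃ i, A i := by
          intro huA
          obtain ⟨k, hk⟩ := Set.mem_iUnion.1 huA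
          exact hW k u hk huv.symm
        have huB : u ∉ Bset G A := (reachN_not_B n u hu).resolve_left huA
        -- u is complete to B
        have hub0 : G.Adj b0 u := IH n (Nat.lt_succ_self n) u hu b0 hb0
        -- minimal level of u
        have hex : ∃ m, reachN G A m u := ⟨n, hu⟩
        classical
        have hm : reachN G A (Nat.find hex) u := Nat.find_spec hex
        have hmn : Nat.find hex ≤ n := Nat.find_min' hex hu
        have hm0 : Nat.find hex ≠ 0 := by
          intro h
          rw [h] at hm
          exact huA hm
        obtain ⟨m', hmeq⟩ : ∃ m', Nat.find hex = m' + 1 :=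
          ⟨Nat.find hex - 1, (Nat.succ_pred_eq_of_ne_zero hm0).symm⟩
        rw [hmeq] at hm hmn
        have hmlt : ∀ k < m' + 1, ¬ reachN G A k u := fun k hk =>
          Nat.find_min hex (hmeq ▸ hk)
        obtain ⟨p, hp, hpu, -⟩ : ∃ p, reachN G A m' p ∧ G.Adj p u ∧ u ∉ Bset G A := by
          rcases hm with hm' | h
          · exact absurd hm' (hmlt m' (Nat.lt_succ_self m'))
          · exact h
        have hpb0 : G.Adj b0 p :=
          IH m' (lt_of_lt_of_le (Nat.lt_succ_self m') (le_trans hmn (Nat.le_succ n))) p hp b0 hb0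
        -- v is not adjacent to p, and v ≠ p (otherwise shorter reach for v)
        have hvp : ¬ G.Adj v p := by
          intro h
          exact hlow (m' + 1) (Nat.lt_succ_of_le hmn)
            (Or.inr ⟨p, hp, h.symm, hvB⟩)
        have dvp : v ≠ p := by
          intro he
          exact hlow m' (Nat.lt_succ_of_le (le_trans (Nat.le_succ m') hmn)) (he ▸ hp)
        have dvb : v ≠ b0 := fun he => hvB (he ▸ hb0)
        by_cases hmixu : ∃ k : Fin 5, ∃ α ∈ A k, G.Adj u α
        · -- u has a neighbour in A: use a "distance-2 pair" for u
          obtain ⟨k, α, hα, huα⟩ := hmixu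
          have hnon : ∃ a'' ∈ ⋃ i, A i, ¬ G.Adj u a'' := by
            by_contra hall
            push_neg at hall
            exact huB ⟨huA, hall⟩
          obtain ⟨a'', ha''U, hua''⟩ := hnon
          obtain ⟨jj, ha''⟩ := Set.mem_iUnion.1 ha''U
          have bull2 : ∀ (u' w' : V) (p q : Fin 5), u' ∈ A p → w' ∈ A q →
              G.Adj u u' → ¬ G.Adj u w' → ¬ G.Adj w' u' → w' ≠ u' → False := by
            intro u' w' p q hu' hw' huu' huw' nwu' dwu
            exact bull_apply hB huv.symm hub0.symm
              (hb0.2 w' (Set.mem_iUnion.2 ⟨q, hw'⟩)) huu'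
              (hb0.2 u' (Set.mem_iUnion.2 ⟨p, hu'⟩)) hxb
              (hW q w' hw') (hW p u' hu') huw' nwu'
              dvb (fun he => hvA (he ▸ Set.mem_iUnion.2 ⟨q, hw'⟩))
              (fun he => hvA (he ▸ Set.mem_iUnion.2 ⟨p, hu'⟩))
              (fun he => huA (he ▸ Set.mem_iUnion.2 ⟨q, hw'⟩)) dwu
          have dne2 : ∀ {p q : Fin 5}, p ≠ q → ∀ w' ∈ A p, ∀ u' ∈ A q, w' ≠ u' :=
            fun hpq w' hw' u' hu' he => Set.disjoint_left.mp (hDisj hpq) hw' (he ▸ hu')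
          rcases pairLem A hNE hα huα ha'' hua'' with
            ⟨⟨u',hu',huu'⟩,⟨w',hw',huw'⟩⟩ | ⟨⟨u',hu',huu'⟩,⟨w',hw',huw'⟩⟩ |
            ⟨⟨u',hu',huu'⟩,⟨w',hw',huw'⟩⟩ | ⟨⟨u',hu',huu'⟩,⟨w',hw',huw'⟩⟩ |
            ⟨⟨u',hu',huu'⟩,⟨w',hw',huw'⟩⟩ | ⟨⟨u',hu',huu'⟩,⟨w',hw',huw'⟩⟩ |
            ⟨⟨u',hu',huu'⟩,⟨w',hw',huw'⟩⟩ | ⟨⟨u',hu',huu'⟩,⟨w',hw',huw'⟩⟩ |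
            ⟨⟨u',hu',huu'⟩,⟨w',hw',huw'⟩⟩ | ⟨⟨u',hu',huu'⟩,⟨w',hw',huw'⟩⟩
          · exact bull2 u' w' 0 2 hu' hw' huu' huw'
              (fun h => hAnti 0 u' hu' w' hw' h.symm) (dne2 (by decide) w' hw' u' hu')
          · exact bull2 u' w' 1 3 hu' hw' huu' huw'
              (fun h => hAnti 1 u' hu' w' hw' h.symm) (dne2 (by decide) w' hw' u' hu')
          · exact bull2 u' w' 2 4 hu' hw' huu' huw'
              (fun h => hAnti 2 u' hu' w' hw' h.symm) (dne2 (by decide) w' hw' u' hu')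
          · exact bull2 u' w' 3 0 hu' hw' huu' huw'
              (fun h => hAnti 3 u' hu' w' hw' h.symm) (dne2 (by decide) w' hw' u' hu')
          · exact bull2 u' w' 4 1 hu' hw' huu' huw'
              (fun h => hAnti 4 u' hu' w' hw' h.symm) (dne2 (by decide) w' hw' u' hu')
          · exact bull2 u' w' 2 0 hu' hw' huu' huw'
              (hAnti 0 w' hw' u' hu') (dne2 (by decide) w' hw' u' hu')
          · exact bull2 u' w' 3 1 hu' hw' huu' huw'
              (hAnti 1 w' hw' u' hu') (dne2 (by decide) w' hw' u' hu')
          · exact bull2 u' w' 4 2 hu' hw' huu' huw'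
              (hAnti 2 w' hw' u' hu') (dne2 (by decide) w' hw' u' hu')
          · exact bull2 u' w' 0 3 hu' hw' huu' huw'
              (hAnti 3 w' hw' u' hu') (dne2 (by decide) w' hw' u' hu')
          · exact bull2 u' w' 1 4 hu' hw' huu' huw'
              (hAnti 4 w' hw' u' hu') (dne2 (by decide) w' hw' u' hu')
        · -- u is also anticomplete to A: use the parent p
          push_neg at hmixu
          -- find s ∈ A with ¬ Adj p s
          have hs : ∃ s, (∃ k : Fin 5, s ∈ A k) ∧ ¬ G.Adj p s ∧ p ≠ s := by
            by_cases hpA : p ∈ ⋃ i, A i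
            · obtain ⟨c, hc⟩ := Set.mem_iUnion.1 hpA
              obtain ⟨s, hsc⟩ := hNE (c + 2)
              refine ⟨s, ⟨c + 2, hsc⟩, hAnti c p hc s hsc, ?_⟩
              intro he
              refine Set.disjoint_left.mp (hDisj (show c ≠ c + 2 by
                intro hcc
                have h0 : c + 0 = c + 2 := by rw [add_zero]; exact hcc
                exact absurd (add_left_cancel h0) (by decide))) hc (he ▸ hsc)
            · have hpB : p ∉ Bset G A := (reachN_not_B m' p hp).resolve_left hpA
              have : ∃ s ∈ ⋃ i, A i, ¬ G.Adj p s := by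
                by_contra hall
                push_neg at hall
                exact hpB ⟨hpA, hall⟩
              obtain ⟨s, hsU, hps⟩ := this
              obtain ⟨k, hsk⟩ := Set.mem_iUnion.1 hsU
              exact ⟨s, ⟨k, hsk⟩, hps, fun he => hpA (he ▸ Set.mem_iUnion.2 ⟨k, hsk⟩)⟩
          obtain ⟨s, ⟨k, hsk⟩, hps, dps⟩ := hs
          -- bull: triangle {u, b0, p}, pendant v at u, pendant s at b0
          exact bull_apply hB huv.symm hub0.symm (hb0.2 s (Set.mem_iUnion.2 ⟨k, hsk⟩))
            hpu.symm hpb0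
            hxb (hW k s hsk) hvp
            (fun h => hmixu k s hsk h) (fun h => hps h.symm)
            dvb (fun he => hvA (he ▸ Set.mem_iUnion.2 ⟨k, hsk⟩)) dvp
            (fun he => huA (he ▸ Set.mem_iUnion.2 ⟨k, hsk⟩)) (fun he => dps he.symm)

end Statement11Aux

/-- In the 5-tuple setup for a (house, bull)-free graph `G`, if
additionally every proper homogeneous set of `G` is a stable set, then `B = ∅`,
i.e. no vertex outside `A` is complete to `A`. -/
theorem stmt11 {V : Type*} [Fintype V] (G : SimpleGraph V)
    (hHouse : FreeOf G house) (hBull : FreeOf G bull)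
    (A : Fin 5 → Set V) (hA : MaximalGoodTuple G A)
    (hhom : ∀ S : Set V, IsProperHomogSet G S → IsStableSet G S) :
    Bset G A = ∅ := by
  obtain ⟨⟨hNE, hDisj, hCompl, hAnti, hLast⟩, -⟩ := hA
  by_contra hBne
  rw [Set.eq_empty_iff_forall_notMem] at hBne
  push_neg at hBne
  obtain ⟨b, hbB⟩ := hBne
  -- the set of vertices reachable from `A` avoiding `B`
  set S : Set V := {v | ∃ n, reachN G A n v} with hSdef
  have hAS : ∀ v ∈ ⋃ i, A i, v ∈ S := fun v hv => ⟨0, hv⟩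
  have hkey : ∀ v ∈ S, ∀ b0 ∈ Bset G A, G.Adj b0 v := by
    rintro v ⟨n, hn⟩ b0 hb0
    exact reach_complete hHouse hBull A hNE hDisj hCompl hAnti hLast n v hn b0 hb0
  have hbS : b ∉ S := by
    rintro ⟨n, hn⟩
    rcases reachN_not_B n b hn with h | h
    · exact hbB.1 h
    · exact h hbB
  have hhomog : IsHomogSet G S := by
    intro v hv
    by_cases hvB : v ∈ Bset G A
    · exact Or.inl fun s hs => hkey s hs v hvB
    · refine Or.inr fun s hs hadj => ?_
      obtain ⟨n, hn⟩ := hs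
      exact hv ⟨n + 1, Or.inr ⟨s, hn, hadj.symm, hvB⟩⟩
  obtain ⟨a0, ha0⟩ := hNE 0
  obtain ⟨a1, ha1⟩ := hNE 1
  have hadj : G.Adj a0 a1 := hCompl 0 (by decide) a0 ha0 a1 ha1
  have hS0 : a0 ∈ S := hAS a0 (Set.mem_iUnion.2 ⟨0, ha0⟩)
  have hS1 : a1 ∈ S := hAS a1 (Set.mem_iUnion.2 ⟨1, ha1⟩)
  have hproper : IsProperHomogSet G S := by
    refine ⟨hhomog, ⟨a0, hS0, a1, hS1, G.ne_of_adj hadj⟩, ?_⟩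
    intro hU
    exact hbS (by rw [hU]; trivial)
  exact hhom S hproper hS0 hS1 (G.ne_of_adj hadj) hadj
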